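/- Let g : Θ × S → {0,1} with Θ finite, let μ be a probability measure on S, and let s⁽¹⁾,…,s⁽ᴺ⁾ be i.i.d. samples from μ. Suppose that for every θ ∈ Θ with μ({s : g(θ,s)=1}) > η we have Pr(Σᵢ g(θ, s⁽ⁱ⁾) ≤ m) ≤ exp(−(Nη−m)²/(2Nη)), and that N ≥ (1/η)(m + L + √(2mL + L²)) with L = ln(|Θ|/δ), Nη ≥ m, δ ∈ (0,1). Then with probability at least 1 − δ, every θ̂ ∈ Θ satisfying the empirical constraint Σᵢ g(θ̂, s⁽ⁱ⁾) ≤ m also satisfies μ({s : g(θ̂,s)=1}) ≤ η. -/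

import Mathlib

open MeasureTheory Real

/-! Union bound over the finite set `Θ`: a parameter `θ` whose failure probability exceeds `η`
survives the empirical test `∑ᵢ g(θ, sᵢ) ≤ m` with probability at most `exp (-(Nη - m)² / (2Nη))`,
and the sample-size condition makes this at most `exp (-L) = δ / |Θ|`. -/

section UnionBound

variable {Ω ι : Type*} [MeasurableSpace Ω] (P : Measure Ω)

theorem measure_univ_sub_card_mul_le_measure_iInter [Fintype ι] (E : ι → Set Ω)
    {ε : ENNReal} (h : ∀ i, P (E i)ᶜ ≤ ε) :
    P Set.univ - Fintype.card ι * ε ≤ P (⋂ i, E i) := by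
  have hcompl : P (⋂ i, E i)ᶜ ≤ Fintype.card ι * ε :=
    calc P (⋂ i, E i)ᶜ = P (⋃ i, (E i)ᶜ) := by rw [Set.compl_iInter]
      _ ≤ ∑ i, P (E i)ᶜ := measure_iUnion_fintype_le P _
      _ ≤ ∑ _i : ι, ε := Finset.sum_le_sum fun i _ => h i
      _ = Fintype.card ι * ε := by simp
  calc P Set.univ - Fintype.card ι * ε ≤ P Set.univ - P (⋂ i, E i)ᶜ := tsub_le_tsub_left hcompl _
    _ ≤ P (⋂ i, E i) := tsub_le_iff_right.2 (measure_univ_le_add_compl _)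

theorem measure_compl_setOf_imp_le {q : Ω → Prop} {p : Prop} {ε : ENNReal}
    (h : ¬p → P {ω | q ω} ≤ ε) : P {ω | q ω → p}ᶜ ≤ ε := by
  by_cases hp : p
  · simp [hp]
  · exact (measure_mono fun ω hω => by simpa [hp] using hω).trans (h hp)

end UnionBound

theorem le_sq_sub_div_of_add_sqrt_le {m L t : ℝ} (hm : 0 ≤ m) (hL : 0 ≤ L)
    (ht : m + L + √(2 * m * L + L ^ 2) ≤ t) : L ≤ (t - m) ^ 2 / (2 * t) := by
  have hs : 0 ≤ √(2 * m * L + L ^ 2) := sqrt_nonneg _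
  obtain rfl | hL := hL.eq_or_lt
  · exact div_nonneg (sq_nonneg _) (by linarith)
  rw [le_div_iff₀ (by linarith)]
  -- `t - m - L ≥ √(L² + 2mL)`; squaring gives `(t - m)² ≥ 2Lt`.
  nlinarith [sq_sqrt (by positivity : 0 ≤ 2 * m * L + L ^ 2)]

theorem log_natCast_div_nonneg (c : ℕ) {δ : ℝ} (hδ₀ : 0 < δ) (hδ₁ : δ ≤ 1) :
    0 ≤ log (c / δ) := by
  rcases Nat.eq_zero_or_pos c with rfl | hc
  · simp
  · exact log_nonneg ((one_le_div hδ₀).2 (hδ₁.trans (Nat.one_le_cast.2 hc)))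

theorem natCast_mul_exp_neg_le {c : ℕ} {δ x : ℝ} (hδ : 0 < δ) (hx : log (c / δ) ≤ x) :
    c * exp (-x) ≤ δ := by
  rcases Nat.eq_zero_or_pos c with rfl | hc
  · simpa using hδ.le
  have hc' : (0 : ℝ) < c := Nat.cast_pos.2 hc
  calc c * exp (-x) ≤ c * exp (-log (c / δ)) := by gcongr
    _ = δ := by rw [exp_neg, exp_log (by positivity), inv_div, mul_div_cancel₀ _ hc'.ne']

theorem natCast_mul_exp_neg_sq_div_le {c : ℕ} {m t δ : ℝ} (hm : 0 ≤ m) (hδ₀ : 0 < δ)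
    (hδ₁ : δ ≤ 1)
    (ht : m + log (c / δ) + √(2 * m * log (c / δ) + log (c / δ) ^ 2) ≤ t) :
    c * exp (-(t - m) ^ 2 / (2 * t)) ≤ δ := by
  rw [neg_div]
  exact natCast_mul_exp_neg_le hδ₀
    (le_sq_sub_div_of_add_sqrt_le hm (log_natCast_div_nonneg c hδ₀ hδ₁) ht)

theorem randomized_certification_general
    {Θ S : Type*} [Fintype Θ] [MeasurableSpace S]
    (μ : Measure S) [IsProbabilityMeasure μ]
    (g : Θ → S → Bool)
    (N m : ℕ) (η δ : ℝ) (hη : 0 < η) (hδ : δ ∈ Set.Ioo (0:ℝ) 1)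
    (L : ℝ) (hL : L = Real.log ((Fintype.card Θ) / δ))
    (hN : (N : ℝ) ≥ (1 / η) * (m + L + Real.sqrt (2 * m * L + L ^ 2)))
    (P : Measure (Fin N → S)) (hP : P = Measure.pi fun _ => μ)
    (htail : ∀ θ : Θ, μ {s | g θ s = true} > ENNReal.ofReal η →
      P {ω | (∑ i, if g θ (ω i) then 1 else 0 : ℕ) ≤ m} ≤
        ENNReal.ofReal (Real.exp (-((N : ℝ) * η - m) ^ 2 / (2 * (N * η))))) :
    P {ω | ∀ θ : Θ, (∑ i, if g θ (ω i) then 1 else 0 : ℕ) ≤ m →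
        μ {s | g θ s = true} ≤ ENNReal.ofReal η} ≥ ENNReal.ofReal (1 - δ) := by
  obtain ⟨hδ₀, hδ₁⟩ := hδ
  subst hL hP
  have hsample : (Fintype.card Θ : ℝ) * exp (-((N : ℝ) * η - m) ^ 2 / (2 * (N * η))) ≤ δ :=
    natCast_mul_exp_neg_sq_div_le (Nat.cast_nonneg m) hδ₀ hδ₁.le
      (by rwa [ge_iff_le, one_div_mul_eq_div, div_le_iff₀ hη] at hN)
  have hunion := measure_univ_sub_card_mul_le_measure_iInter _ _
    fun θ => measure_compl_setOf_imp_le _ fun h => htail θ (not_le.mp h)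
  rw [← Set.ofPred_forall, measure_univ] at hunion
  calc ENNReal.ofReal (1 - δ) = 1 - ENNReal.ofReal δ := by
        rw [ENNReal.ofReal_sub _ hδ₀.le, ENNReal.ofReal_one]
    _ ≤ 1 - Fintype.card Θ * ENNReal.ofReal (exp (-((N : ℝ) * η - m) ^ 2 / (2 * (N * η)))) := by
        rw [← ENNReal.ofReal_natCast, ← ENNReal.ofReal_mul (Nat.cast_nonneg _)]
        exact tsub_le_tsub_left (ENNReal.ofReal_le_ofReal hsample) 1
    _ ≤ _ := hunion

theorem randomized_certification
    {Θ S : Type*} [Fintype Θ] [Nonempty Θ] [MeasurableSpace S]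
    (μ : Measure S) [IsProbabilityMeasure μ]
    (g : Θ → S → Bool) (hg : ∀ θ, Measurable (g θ))
    (N m : ℕ) (η δ : ℝ) (hη : 0 < η) (hδ : δ ∈ Set.Ioo (0:ℝ) 1)
    (L : ℝ) (hL : L = Real.log ((Fintype.card Θ) / δ))
    (hNη : (m : ℝ) ≤ N * η)
    (hN : (N : ℝ) ≥ (1 / η) * (m + L + Real.sqrt (2 * m * L + L ^ 2)))
    (P : Measure (Fin N → S)) (hP : P = Measure.pi fun _ => μ)
    (htail : ∀ θ : Θ, μ {s | g θ s = true} > ENNReal.ofReal η →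
      P {ω | (∑ i, if g θ (ω i) then 1 else 0 : ℕ) ≤ m} ≤
        ENNReal.ofReal (Real.exp (-((N : ℝ) * η - m) ^ 2 / (2 * (N * η))))) :
    P {ω | ∀ θ : Θ, (∑ i, if g θ (ω i) then 1 else 0 : ℕ) ≤ m →
        μ {s | g θ s = true} ≤ ENNReal.ofReal η} ≥ ENNReal.ofReal (1 - δ) :=
  randomized_certification_general μ g N m η δ hη hδ L hL hN P hP htail
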